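/- arXiv:2310.19169 — 2 statements merged into one kernel-verified Lean document; each statement's English description precedes it below -/
import Mathlib

section
/- Let q ≥ 2 and n ≥ 2 be integers, and let G be a finite simple graph that is strongly regular with parameters (v, k, λ, μ) where v = (q^{2n}−1)/(q−1), k = q(q^{2n−2}−1)/(q−1), λ = (q^{2n−2}−1)/(q−1) − 2, and μ = (q^{2n−2}−1)/(q−1) (in particular, the symplectic polar graph Sp(2n,q) for q a prime power). Then θ(Ḡ) = (q^n−1)/(q−1) and θ(G) = q^n + 1, where Ḡ is the complement of G. -/
/-!
Put `t = qⁿ⁻¹` and `m = (t² - 1)/(q - 1)`. The parameters give `A² = (t² - 1) - 2A + mJ` and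
`AJ = qmJ`, so `A` has eigenvalues `qm`, `t - 1` and `-(t + 1)`, and every certificate lives in the
span of `1`, `A` and `J`. If `B` is feasible for `θ(H)` and `θ + cA_H - J` is positive
semidefinite, then `∑ B ≤ θ`; a feasible `B` with `∑ B = θ` and such a dual matrix pin `θ(H)` down.
For `Ḡ` take `B ∝ (t + 1) + A` and for `G` take `B ∝ t + Ā`: they are positive semidefinite because
the least eigenvalues of `A` and `Ā` are `-(t + 1)` and `-t`. The dual matrices are nonnegative
multiples of the (scaled) eigenprojections `E` of the two nontrivial eigenvalues, which are positive
semidefinite because `E² = 2tE`.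
-/
open scoped Classical

noncomputable def lovaszTheta {V : Type*} [Fintype V] (G : SimpleGraph V) : ℝ :=
  sSup { x : ℝ | ∃ B : Matrix V V ℝ, B.PosSemidef ∧ B.trace = 1 ∧
    (∀ i j, G.Adj i j → B i j = 0) ∧ x = ∑ i, ∑ j, B i j }

noncomputable def nbhd {V : Type*} [Fintype V] (G : SimpleGraph V) (v : V) : Finset V :=
  Finset.univ.filter fun w => G.Adj v w

/-- `G` is strongly regular with parameters `(n, d, l, m)`: it has `n` vertices, is
`d`-regular, adjacent vertices have `l` common neighbors, distinct nonadjacent vertices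
have `m` common neighbors, and `G` is neither complete nor empty. -/
def IsSRG {V : Type*} [Fintype V] (G : SimpleGraph V) (n d l m : ℕ) : Prop :=
  Fintype.card V = n ∧
  (∀ v, (nbhd G v).card = d) ∧
  (∀ v w, G.Adj v w → (nbhd G v ∩ nbhd G w).card = l) ∧
  (∀ v w, v ≠ w → ¬ G.Adj v w → (nbhd G v ∩ nbhd G w).card = m) ∧
  G ≠ ⊤ ∧ G ≠ ⊥

open Matrix

namespace Matrix

variable {V : Type*} [Fintype V]

theorem posSemidef_of_one {R : Type*} [CommRing R] [PartialOrder R] [StarRing R]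
    [StarOrderedRing R] : (of 1 : Matrix V V R).PosSemidef := by
  have : (of 1 : Matrix V V R) = vecMulVec 1 (star 1) := by ext; simp [vecMulVec]
  exact this ▸ posSemidef_vecMulVec_self_star 1

theorem PosSemidef.of_mul_self_eq_smul {T : Matrix V V ℝ} {γ : ℝ} (hT : T.IsHermitian)
    (hγ : 0 < γ) (h : T * T = γ • T) : T.PosSemidef := by
  have : T = γ⁻¹ • (Tᴴ * T) := by rw [hT.eq, h, smul_smul, inv_mul_cancel₀ hγ.ne', one_smul]
  exact this ▸ (posSemidef_conjTranspose_mul_self T).smul (inv_nonneg.2 hγ.le)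

open scoped MatrixOrder in
theorem PosSemidef.trace_mul_nonneg {B T : Matrix V V ℝ} (hB : B.PosSemidef)
    (hT : T.PosSemidef) : 0 ≤ (B * T).trace := by
  obtain ⟨C, rfl⟩ := CStarAlgebra.nonneg_iff_eq_star_mul_self.mp hT.nonneg
  rw [← Matrix.mul_assoc, trace_mul_cycle]
  exact (hB.mul_mul_conjTranspose_same C).trace_nonneg

variable {α : Type*} [NonAssocSemiring α]

theorem sum_sum_eq_trace_mul_of_one (M : Matrix V V α) :
    ∑ i, ∑ j, M i j = (M * of 1).trace := by
  simp [trace, mul_apply]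

theorem trace_of_one : (of 1 : Matrix V V α).trace = Fintype.card V := by
  simp [trace]

theorem of_one_mul_of_one : (of 1 : Matrix V V α) * of 1 = (Fintype.card V : α) • of 1 := by
  ext; simp [mul_apply]

end Matrix

section LovaszTheta

variable {V : Type*} [Fintype V] [DecidableEq V]

theorem sum_le_of_dual_certificate (H : SimpleGraph V) [DecidableRel H.Adj]
    {B T : Matrix V V ℝ} {θ c : ℝ} (hB : B.PosSemidef) (htr : B.trace = 1)
    (hB0 : ∀ i j, H.Adj i j → B i j = 0) (hT : T.PosSemidef)
    (hTeq : T = θ • 1 + c • H.adjMatrix ℝ - of 1) :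
    ∑ i, ∑ j, B i j ≤ θ := by
  have hBA : (B * H.adjMatrix ℝ).trace = 0 := by
    refine Finset.sum_eq_zero fun i _ => Finset.sum_eq_zero fun j _ => ?_
    by_cases hij : H.Adj i j
    · simp [hB0 i j hij]
    · simp [SimpleGraph.adjMatrix_apply, H.adj_comm, hij]
  have hJ : of 1 = θ • 1 + c • H.adjMatrix ℝ - T := by rw [hTeq]; abel
  have := hB.trace_mul_nonneg hT
  rw [sum_sum_eq_trace_mul_of_one, hJ, Matrix.mul_sub, Matrix.mul_add, trace_sub, trace_add,
    mul_smul_comm, mul_smul_comm, trace_smul, trace_smul, Matrix.mul_one, htr, hBA]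
  simp only [smul_eq_mul]
  linarith

theorem lovaszTheta_eq_of_certificates (H : SimpleGraph V) [DecidableRel H.Adj]
    {B T : Matrix V V ℝ} {θ c : ℝ} (hB : B.PosSemidef) (htr : B.trace = 1)
    (hB0 : ∀ i j, H.Adj i j → B i j = 0) (hsum : ∑ i, ∑ j, B i j = θ)
    (hT : T.PosSemidef) (hTeq : T = θ • 1 + c • H.adjMatrix ℝ - of 1) :
    lovaszTheta H = θ := by
  have hub : ∀ x ∈ { x : ℝ | ∃ B : Matrix V V ℝ, B.PosSemidef ∧ B.trace = 1 ∧
      (∀ i j, H.Adj i j → B i j = 0) ∧ x = ∑ i, ∑ j, B i j }, x ≤ θ := by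
    rintro _ ⟨B', hB', htr', hB0', rfl⟩
    exact sum_le_of_dual_certificate H hB' htr' hB0' hT hTeq
  exact le_antisymm (csSup_le ⟨θ, B, hB, htr, hB0, hsum.symm⟩ hub)
    (le_csSup ⟨θ, hub⟩ ⟨B, hB, htr, hB0, hsum.symm⟩)

end LovaszTheta

theorem IsSRG.isSRGWith {V : Type*} [Fintype V] {G : SimpleGraph V} [DecidableRel G.Adj]
    {n d l m : ℕ} (h : IsSRG G n d l m) : G.IsSRGWith n d l m := by
  obtain ⟨hcard, hdeg, hadj, hnadj, -, -⟩ := h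
  have hnbhd : ∀ v, nbhd G v = G.neighborFinset v := fun v => by ext; simp [nbhd]
  have hcommon : ∀ v w,
      Fintype.card (G.commonNeighbors v w) = (nbhd G v ∩ nbhd G w).card := fun v w => by
    rw [← Set.toFinset_card]
    congr 1
    ext u
    simp [Set.mem_toFinset, SimpleGraph.mem_commonNeighbors, nbhd]
  exact ⟨hcard, fun v => by rw [← G.card_neighborFinset_eq_degree, ← hnbhd, hdeg],
    fun v w hvw => by rw [hcommon, hadj v w hvw],
    fun v w hne hvw => by rw [hcommon, hnadj v w hne hvw]⟩

theorem Nat.cast_pow_sub_one_div_sub_one {K : Type*} [DivisionRing K] [CharZero K] {q : ℕ}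
    (hq : 1 < q) (a : ℕ) :
    (((q ^ a - 1) / (q - 1) : ℕ) : K) = ((q : K) ^ a - 1) / ((q : K) - 1) := by
  have hdvd : q - 1 ∣ q ^ a - 1 := by simpa using Nat.sub_dvd_pow_sub_pow q 1 a
  have hq' : ((q - 1 : ℕ) : K) ≠ 0 := by norm_cast; omega
  rw [Nat.cast_div hdvd hq', Nat.cast_sub (Nat.one_le_pow _ _ (by omega)), Nat.cast_sub hq.le]
  push_cast
  rfl

namespace SimpleGraph

variable {V : Type*} [DecidableEq V] (G : SimpleGraph V) [DecidableRel G.Adj]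

theorem adjMatrix_compl_eq : Gᶜ.adjMatrix ℝ = of 1 - 1 - G.adjMatrix ℝ := by
  rw [← G.compl_adjMatrix_eq_adjMatrix_compl ℝ,
    ← G.one_add_adjMatrix_add_compl_adjMatrix_eq_of_one ℝ]
  abel

variable [Fintype V]

/-- Strong regularity with parameters `((p²t² - 1)/(p - 1), pm, m - 2, m)`, `m = (t² - 1)/(p - 1)`,
read through the adjacency matrix; its eigenvalues are `pm`, `t - 1` and `-(t + 1)`.
For `Sp(2n, q)`, `p = q` and `t = qⁿ⁻¹`. -/
structure SymplecticRelations (p t : ℝ) : Prop where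
  card_eq : (Fintype.card V : ℝ) = (p ^ 2 * t ^ 2 - 1) / (p - 1)
  adjMatrix_mul_self : G.adjMatrix ℝ * G.adjMatrix ℝ =
    (t ^ 2 - 1) • (1 : Matrix V V ℝ) - (2 : ℝ) • G.adjMatrix ℝ + ((t ^ 2 - 1) / (p - 1)) • of 1
  adjMatrix_mul_of_one : G.adjMatrix ℝ * of 1 = (p * ((t ^ 2 - 1) / (p - 1))) • of 1

/-- `2t` times the primitive idempotent of the eigenvalue `t - 1`. -/
noncomputable def idempotentUpper (p t : ℝ) : Matrix V V ℝ :=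
  (t + 1) • 1 + G.adjMatrix ℝ - ((t + 1) / (p * t + 1)) • of 1

/-- `2t` times the primitive idempotent of the eigenvalue `-(t + 1)`. -/
noncomputable def idempotentLower (p t : ℝ) : Matrix V V ℝ :=
  (t - 1) • 1 - G.adjMatrix ℝ + ((t - 1) / (p * t - 1)) • of 1

variable {G}

theorem IsSRGWith.symplecticRelations {N K L M : ℕ} (h : G.IsSRGWith N K L M) {p t : ℝ}
    (hp : p ≠ 1) (hN : (N : ℝ) = (p ^ 2 * t ^ 2 - 1) / (p - 1))
    (hK : (K : ℝ) = p * ((t ^ 2 - 1) / (p - 1))) (hL : (L : ℝ) = (t ^ 2 - 1) / (p - 1) - 2)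
    (hM : (M : ℝ) = (t ^ 2 - 1) / (p - 1)) : G.SymplecticRelations p t where
  card_eq := by rw [h.card, hN]
  adjMatrix_mul_self := by
    have : p - 1 ≠ 0 := sub_ne_zero.2 hp
    rw [← sq, h.matrix_eq, adjMatrix_compl_eq]
    simp only [← Nat.cast_smul_eq_nsmul ℝ, hK, hL, hM]
    match_scalars <;> field_simp <;> ring
  adjMatrix_mul_of_one := by
    ext i j
    simp [adjMatrix_mul_apply, h.regular i, hK]

theorem IsSRGWith.symplecticRelations_of_pow {q n : ℕ} (hq : 2 ≤ q) (hn : 2 ≤ n)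
    (h : G.IsSRGWith ((q ^ (2 * n) - 1) / (q - 1)) (q * (q ^ (2 * n - 2) - 1) / (q - 1))
      ((q ^ (2 * n - 2) - 1) / (q - 1) - 2) ((q ^ (2 * n - 2) - 1) / (q - 1))) :
    G.SymplecticRelations q ((q : ℝ) ^ (n - 1)) := by
  have hqR : (2 : ℝ) ≤ q := by exact_mod_cast hq
  have hsq : ((q : ℝ) ^ (n - 1)) ^ 2 = (q : ℝ) ^ (2 * n - 2) := by
    rw [← pow_mul]; congr 1; omega
  have hM := Nat.cast_pow_sub_one_div_sub_one (K := ℝ) hq (2 * n - 2)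
  rw [← hsq] at hM
  have hM2 : 2 ≤ (q ^ (2 * n - 2) - 1) / (q - 1) := by
    have : (q : ℝ) ≤ (q : ℝ) ^ (n - 1) := le_self_pow₀ (by linarith) (by omega)
    have : (2 : ℝ) ≤ (((q : ℝ) ^ (n - 1)) ^ 2 - 1) / (q - 1) := by
      rw [le_div_iff₀ (by linarith)]; nlinarith
    exact_mod_cast hM ▸ this
  refine h.symplecticRelations (by linarith) ?_ ?_ ?_ hM
  · rw [Nat.cast_pow_sub_one_div_sub_one hq, hsq, ← pow_add,
      show 2 + (2 * n - 2) = 2 * n by omega]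
  · rw [Nat.mul_div_assoc _ (by simpa using Nat.sub_dvd_pow_sub_pow q 1 (2 * n - 2)),
      Nat.cast_mul, hM]
  · rw [Nat.cast_sub hM2, hM, Nat.cast_ofNat]

namespace SymplecticRelations

variable {p t : ℝ}

theorem card_pos (h : G.SymplecticRelations p t) (hp : 1 < p) (ht : 1 ≤ t) :
    (0 : ℝ) < Fintype.card V := by
  have : 1 < p * t := by nlinarith
  rw [h.card_eq]
  exact div_pos (by nlinarith) (by linarith)

theorem of_one_mul_adjMatrix (h : G.SymplecticRelations p t) :
    of 1 * G.adjMatrix ℝ = (p * ((t ^ 2 - 1) / (p - 1))) • of 1 :=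
  calc of 1 * G.adjMatrix ℝ = (G.adjMatrix ℝ * of 1)ᵀ := by
        rw [transpose_mul, transpose_adjMatrix]; rfl
    _ = _ := by rw [h.adjMatrix_mul_of_one, transpose_smul]; rfl

theorem idempotentUpper_mul_self (h : G.SymplecticRelations p t) (hp : 1 < p) (ht : 0 < t) :
    G.idempotentUpper p t * G.idempotentUpper p t = (2 * t) • G.idempotentUpper p t := by
  have : p - 1 ≠ 0 := by linarith
  have : p * t + 1 ≠ 0 := by nlinarith
  simp only [idempotentUpper, add_mul, mul_add, sub_mul, mul_sub, smul_mul_assoc, mul_smul_comm,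
    Matrix.one_mul, Matrix.mul_one, h.adjMatrix_mul_self, h.adjMatrix_mul_of_one,
    h.of_one_mul_adjMatrix, of_one_mul_of_one, h.card_eq, smul_smul, smul_sub, smul_add]
  match_scalars <;> field_simp <;> ring

theorem idempotentLower_mul_self (h : G.SymplecticRelations p t) (hp : 1 < p) (ht : 1 ≤ t) :
    G.idempotentLower p t * G.idempotentLower p t = (2 * t) • G.idempotentLower p t := by
  have : p - 1 ≠ 0 := by linarith
  have : p * t - 1 ≠ 0 := by nlinarith
  have : t * p - 1 ≠ 0 := by nlinarith
  simp only [idempotentLower, add_mul, mul_add, sub_mul, mul_sub, smul_mul_assoc, mul_smul_comm,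
    Matrix.one_mul, Matrix.mul_one, h.adjMatrix_mul_self, h.adjMatrix_mul_of_one,
    h.of_one_mul_adjMatrix, of_one_mul_of_one, h.card_eq, smul_smul, smul_sub, smul_add]
  match_scalars <;> field_simp <;> ring

theorem posSemidef_idempotentUpper (h : G.SymplecticRelations p t) (hp : 1 < p) (ht : 0 < t) :
    (G.idempotentUpper p t).PosSemidef :=
  .of_mul_self_eq_smul (((isHermitian_one.smul (.all _)).add (G.isHermitian_adjMatrix ℝ)).sub
    (posSemidef_of_one.isHermitian.smul (.all _))) (by positivity)
    (h.idempotentUpper_mul_self hp ht)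

theorem posSemidef_idempotentLower (h : G.SymplecticRelations p t) (hp : 1 < p) (ht : 1 ≤ t) :
    (G.idempotentLower p t).PosSemidef :=
  .of_mul_self_eq_smul (((isHermitian_one.smul (.all _)).sub (G.isHermitian_adjMatrix ℝ)).add
    (posSemidef_of_one.isHermitian.smul (.all _))) (by positivity)
    (h.idempotentLower_mul_self hp ht)

theorem lovaszTheta_compl_eq (h : G.SymplecticRelations p t) (hp : 1 < p) (ht : 1 ≤ t) :
    lovaszTheta Gᶜ = (p * t - 1) / (p - 1) := by
  have hN := h.card_pos hp ht
  have : p - 1 ≠ 0 := by linarith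
  have : p * t + 1 ≠ 0 := by nlinarith
  have : p * t - 1 ≠ 0 := by nlinarith
  have : t ≠ 0 := by linarith
  have : t + 1 ≠ 0 := by linarith
  have hB : (t + 1) • (1 : Matrix V V ℝ) + G.adjMatrix ℝ =
      G.idempotentUpper p t + ((t + 1) / (p * t + 1)) • of 1 := by
    simp only [idempotentUpper]; abel
  refine lovaszTheta_eq_of_certificates Gᶜ
    (B := ((Fintype.card V : ℝ) * (t + 1))⁻¹ • ((t + 1) • 1 + G.adjMatrix ℝ))
    (T := ((p * t - 1) / ((p - 1) * t)) • G.idempotentLower p t)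
    (c := (p * t - 1) / ((p - 1) * t)) ?_ ?_ ?_ ?_ ?_ ?_
  · rw [hB]
    exact ((h.posSemidef_idempotentUpper hp (by linarith)).add
      (posSemidef_of_one.smul (by positivity))).smul (by positivity)
  · simp only [trace_smul, trace_add, trace_one, trace_adjMatrix, smul_eq_mul, add_zero]
    field_simp
  · intro i j hij
    rw [compl_adj] at hij
    simp [hij.1, hij.2]
  · simp only [sum_sum_eq_trace_mul_of_one, smul_mul_assoc, add_mul, Matrix.one_mul,
      h.adjMatrix_mul_of_one, trace_smul, trace_add, trace_of_one, smul_eq_mul]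
    field_simp
    ring
  · exact (h.posSemidef_idempotentLower hp ht).smul
      (div_nonneg (by nlinarith) (mul_nonneg (by linarith) (by linarith)))
  · rw [adjMatrix_compl_eq]
    simp only [idempotentLower]
    match_scalars <;> field_simp <;> ring

theorem lovaszTheta_eq (h : G.SymplecticRelations p t) (hp : 1 < p) (ht : 1 ≤ t) :
    lovaszTheta G = p * t + 1 := by
  have hN := h.card_pos hp ht
  have hpt : 1 < p * t := by nlinarith
  have : p - 1 ≠ 0 := by linarith
  have : p * t - 1 ≠ 0 := by linarith
  have : t * p - 1 ≠ 0 := by linarith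
  have : p ^ 2 * t ^ 2 - 1 ≠ 0 := by nlinarith
  have : t ≠ 0 := by linarith
  have : t + 1 ≠ 0 := by linarith
  have hB : t • (1 : Matrix V V ℝ) + Gᶜ.adjMatrix ℝ =
      G.idempotentLower p t + (t * (p - 1) / (p * t - 1)) • of 1 := by
    rw [adjMatrix_compl_eq]
    simp only [idempotentLower]
    match_scalars <;> field_simp <;> ring
  refine lovaszTheta_eq_of_certificates G
    (B := ((Fintype.card V : ℝ) * t)⁻¹ • (t • 1 + Gᶜ.adjMatrix ℝ))
    (T := ((p * t + 1) / (t + 1)) • G.idempotentUpper p t) (c := (p * t + 1) / (t + 1))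
    ?_ ?_ ?_ ?_ ?_ ?_
  · rw [hB]
    exact ((h.posSemidef_idempotentLower hp ht).add (posSemidef_of_one.smul
      (div_nonneg (by nlinarith) (by linarith)))).smul (by positivity)
  · simp only [trace_smul, trace_add, trace_one, trace_adjMatrix, smul_eq_mul, add_zero]
    field_simp
  · intro i j hij
    simp [hij, hij.ne]
  · rw [adjMatrix_compl_eq]
    simp only [sum_sum_eq_trace_mul_of_one, smul_mul_assoc, add_mul, sub_mul, Matrix.one_mul,
      h.adjMatrix_mul_of_one, of_one_mul_of_one, trace_smul, trace_add, trace_sub, trace_of_one,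
      smul_eq_mul]
    rw [h.card_eq]
    field_simp
    ring
  · exact (h.posSemidef_idempotentUpper hp (by linarith)).smul (by positivity)
  · simp only [idempotentUpper]
    match_scalars <;> field_simp

end SymplecticRelations

end SimpleGraph

theorem stmt4 {V : Type*} [Fintype V] (G : SimpleGraph V) (q n : ℕ)
    (hq : 2 ≤ q) (hn : 2 ≤ n)
    (h : IsSRG G ((q ^ (2 * n) - 1) / (q - 1)) (q * (q ^ (2 * n - 2) - 1) / (q - 1))
      ((q ^ (2 * n - 2) - 1) / (q - 1) - 2) ((q ^ (2 * n - 2) - 1) / (q - 1))) :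
    lovaszTheta Gᶜ = ((q : ℝ) ^ n - 1) / ((q : ℝ) - 1) ∧
    lovaszTheta G = (q : ℝ) ^ n + 1 := by
  have hrel := h.isSRGWith.symplecticRelations_of_pow hq hn
  have hqR : (1 : ℝ) < q := by exact_mod_cast hq
  have ht : (1 : ℝ) ≤ (q : ℝ) ^ (n - 1) := one_le_pow₀ hqR.le
  have hqn : (q : ℝ) * (q : ℝ) ^ (n - 1) = (q : ℝ) ^ n := by
    rw [← pow_succ']; congr 1; omega
  rw [← hqn]
  exact ⟨hrel.lovaszTheta_compl_eq hqR ht, hrel.lovaszTheta_eq hqR ht⟩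
end

section
/- Let G be a perfect finite simple graph and Ḡ its complement. Then ω(G) = θ'(Ḡ) = θ(Ḡ) = χ(G) = Θ(Ḡ), and α(G) = θ'(G) = θ(G) = Θ(G) = χ(Ḡ). -/
open scoped Classical

noncomputable def schrijverTheta {V : Type*} [Fintype V] (G : SimpleGraph V) : ℝ :=
  sSup { x : ℝ | ∃ B : Matrix V V ℝ, B.PosSemidef ∧ B.trace = 1 ∧
    (∀ i j, G.Adj i j → B i j = 0) ∧ (∀ i j, 0 ≤ B i j) ∧ x = ∑ i, ∑ j, B i j }

noncomputable def indepNum {V : Type*} [Fintype V] (G : SimpleGraph V) : ℕ :=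
  sSup { n : ℕ | ∃ s : Finset V, (∀ i ∈ s, ∀ j ∈ s, i ≠ j → ¬ G.Adj i j) ∧ s.card = n }

noncomputable def cliqueNum {V : Type*} [Fintype V] (G : SimpleGraph V) : ℕ :=
  sSup { n : ℕ | ∃ s : Finset V, (∀ i ∈ s, ∀ j ∈ s, i ≠ j → G.Adj i j) ∧ s.card = n }

def strongProd {α β : Type*} (G : SimpleGraph α) (H : SimpleGraph β) :
    SimpleGraph (α × β) where
  Adj x y := x ≠ y ∧ (x.1 = y.1 ∨ G.Adj x.1 y.1) ∧ (x.2 = y.2 ∨ H.Adj x.2 y.2)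
  symm := by
    constructor
    rintro x y ⟨h0, h1, h2⟩
    exact ⟨h0.symm, h1.imp Eq.symm (fun h => h.symm), h2.imp Eq.symm (fun h => h.symm)⟩
  loopless := by constructor; rintro x ⟨h0, -, -⟩; exact h0 rfl

def strongPow {α : Type*} (G : SimpleGraph α) (k : ℕ) : SimpleGraph (Fin k → α) where
  Adj x y := x ≠ y ∧ ∀ i, x i = y i ∨ G.Adj (x i) (y i)
  symm := by
    constructor
    rintro x y ⟨h0, h1⟩
    exact ⟨h0.symm, fun i => (h1 i).imp Eq.symm (fun h => h.symm)⟩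
  loopless := by constructor; rintro x ⟨h0, -⟩; exact h0 rfl

noncomputable def shannonCapacity {α : Type*} [Fintype α] (G : SimpleGraph α) : ℝ :=
  ⨆ k : ℕ+, (indepNum (strongPow G (k : ℕ)) : ℝ) ^ ((1 : ℝ) / ((k : ℕ) : ℝ))

def IsPerfect {V : Type*} [Fintype V] (G : SimpleGraph V) : Prop :=
  ∀ s : Finset V,
    (G.induce (s : Set V)).chromaticNumber = (cliqueNum (G.induce (s : Set V)) : ℕ∞)

/-!
Lovász's sandwich: for every graph `H`, `α(H) ≤ θ'(H) ≤ θ(H) ≤ χ(Hᶜ)` and `α(H) ≤ Θ(H) ≤ χ(Hᶜ)`.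
The bound `θ(H) ≤ n` for an `n`-colouring of `Hᶜ` splits the all-ones vector into the indicator
vectors of the colour classes, which are cliques of `H`, and applies Cauchy–Schwarz to the
quadratic form of `B`; the bound on `Θ` colours the strong powers coordinatewise. Hence all these
invariants equal `α(H)` as soon as `χ(Hᶜ) = α(H)`. For `H = Gᶜ` this is the perfection of `G`; for
`H = G` it is the weak perfect graph theorem, proved via Gasparian's criterion: if
`|X| ≤ α(X) ω(X)` for every vertex set `X` (a condition that perfection implies and that is
symmetric under complementation), every `X` is `ω(X)`-colourable. In a minimal counterexample `X`
one finds `αω + 1` independent sets `Aᵢ` (a maximum one and the colour classes of optimal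
colourings of `X - a`, `a ∈ A₀`) and `ω`-cliques `Kⱼ` with `|Kⱼ ∩ Aᵢ| = [i ≠ j]`; so the incidence
vectors of the `Aᵢ` are linearly independent in `ℚ^X`, and `αω + 1 ≤ |X|`.
-/

open Finset

theorem cliqueNum_eq_simpleGraph_cliqueNum {V : Type*} [Fintype V] (G : SimpleGraph V) :
    cliqueNum G = G.cliqueNum := by
  simp only [cliqueNum, SimpleGraph.cliqueNum, SimpleGraph.isNClique_iff,
    SimpleGraph.IsClique, Set.Pairwise, Finset.mem_coe]

theorem indepNum_eq_simpleGraph_indepNum {V : Type*} [Fintype V] (G : SimpleGraph V) :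
    indepNum G = G.indepNum := by
  simp only [indepNum, SimpleGraph.indepNum, SimpleGraph.isNIndepSet_iff,
    SimpleGraph.IsIndepSet, Set.Pairwise, Finset.mem_coe]

theorem eq_one_of_sum_add_one_eq_card {ι : Type*} [Fintype ι] {g : ι → ℕ} {i j : ι}
    (hle : ∀ k, g k ≤ 1) (hj : g j = 0) (hsum : ∑ k, g k + 1 = Fintype.card ι) (hij : i ≠ j) :
    g i = 1 := by
  by_contra hi
  have hbound : ∑ k, (g k + (if k = i then 1 else 0) + (if k = j then 1 else 0)) ≤ ∑ _k : ι, 1 :=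
    sum_le_sum fun k _ => by
      have := hle k
      split_ifs with hki hkj hkj
      · exact absurd (hki.symm.trans hkj) hij
      · subst hki; omega
      · subst hkj; omega
      · omega
  simp only [sum_add_distrib, sum_ite_eq', mem_univ, if_true, sum_const, card_univ,
    smul_eq_mul, mul_one] at hbound
  omega

theorem SimpleGraph.Coloring.adj_of_ne_of_eq {V α : Type*} {H : SimpleGraph V} {v w : V}
    (C : Hᶜ.Coloring α) (hvw : v ≠ w) (hC : C v = C w) : H.Adj v w :=
  by_contra fun h => C.valid ((H.compl_adj v w).2 ⟨hvw, h⟩) hC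

section Gasparian

variable {V : Type*} {G : SimpleGraph V} {s t : Finset V} {a : V} {m n : ℕ}

noncomputable def cliqueNumOn (G : SimpleGraph V) (s : Finset V) : ℕ :=
  (s.powerset.filter fun t : Finset V => G.IsClique (t : Set V)).sup card

def ColorableOn (G : SimpleGraph V) (n : ℕ) (s : Finset V) : Prop :=
  ∃ f : V → ℕ, (∀ v ∈ s, f v < n) ∧ ∀ v ∈ s, ∀ w ∈ s, G.Adj v w → f v ≠ f w

theorem SimpleGraph.IsClique.card_le_cliqueNumOn (ht : G.IsClique (t : Set V)) (hts : t ⊆ s) :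
    #t ≤ cliqueNumOn G s :=
  le_sup (mem_filter.2 ⟨mem_powerset.2 hts, ht⟩)

theorem exists_isClique_card_eq_cliqueNumOn (G : SimpleGraph V) (s : Finset V) :
    ∃ t ⊆ s, G.IsClique (t : Set V) ∧ #t = cliqueNumOn G s := by
  obtain ⟨t, ht, hcard⟩ := exists_mem_eq_sup
    (s.powerset.filter fun t : Finset V => G.IsClique (t : Set V)) ⟨∅, by simp⟩ card
  rw [mem_filter, mem_powerset] at ht
  exact ⟨t, ht.1, ht.2, hcard.symm⟩

theorem SimpleGraph.IsClique.card_inter_le_one {K A : Finset V} (hK : G.IsClique (K : Set V))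
    (hA : G.IsIndepSet (A : Set V)) : #(K ∩ A) ≤ 1 :=
  card_le_one.2 fun a ha b hb => by_contra fun hab => by
    rw [mem_inter] at ha hb
    exact hA (mem_coe.2 ha.2) (mem_coe.2 hb.2) hab (hK (mem_coe.2 ha.1) (mem_coe.2 hb.1) hab)

theorem cliqueNumOn_mono (h : s ⊆ t) : cliqueNumOn G s ≤ cliqueNumOn G t := by
  obtain ⟨u, hus, hu, hcard⟩ := exists_isClique_card_eq_cliqueNumOn G s
  exact hcard ▸ hu.card_le_cliqueNumOn (hus.trans h)

theorem cliqueNumOn_pos (hs : s.Nonempty) : 0 < cliqueNumOn G s := by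
  obtain ⟨v, hv⟩ := hs
  simpa using
    (coe_singleton v ▸ G.isClique_singleton v).card_le_cliqueNumOn (singleton_subset_iff.2 hv)

theorem cliqueNumOn_univ [Fintype V] : cliqueNumOn G univ = G.cliqueNum := by
  obtain ⟨t, -, ht, hcard⟩ := exists_isClique_card_eq_cliqueNumOn G univ
  obtain ⟨u, hu⟩ := G.exists_isNClique_cliqueNum
  exact le_antisymm (hcard ▸ ht.card_le_cliqueNum)
    (hu.card_eq ▸ hu.isClique.card_le_cliqueNumOn (subset_univ u))

theorem cliqueNum_induce_le_cliqueNumOn :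
    (G.induce (s : Set V)).cliqueNum ≤ cliqueNumOn G s := by
  obtain ⟨t, ht⟩ := (G.induce (s : Set V)).exists_isNClique_cliqueNum
  rw [SimpleGraph.isNClique_induce_iff] at ht
  refine ht.card_eq ▸ ht.isClique.card_le_cliqueNumOn fun v hv => ?_
  obtain ⟨w, -, rfl⟩ := mem_map.1 hv
  exact w.2

theorem ColorableOn.mono (h : ColorableOn G n s) (hnm : n ≤ m) : ColorableOn G m s :=
  let ⟨f, hlt, hf⟩ := h
  ⟨f, fun v hv => (hlt v hv).trans_le hnm, hf⟩

theorem ColorableOn.card_le_mul_cliqueNumOn_compl (h : ColorableOn G n s) :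
    #s ≤ n * cliqueNumOn Gᶜ s := by
  obtain ⟨f, hlt, hf⟩ := h
  calc #s = ∑ c ∈ range n, #{v ∈ s | f v = c} :=
        card_eq_sum_card_fiberwise fun v hv => mem_range.2 (hlt v hv)
    _ ≤ ∑ _c ∈ range n, cliqueNumOn Gᶜ s := by
        refine sum_le_sum fun c _ => SimpleGraph.IsClique.card_le_cliqueNumOn ?_ (filter_subset _ _)
        intro v hv w hw hvw
        simp only [coe_filter, Set.mem_ofPred_eq] at hv hw
        exact (G.compl_adj v w).2
          ⟨hvw, fun hadj => hf v hv.1 w hw.1 hadj (hv.2.trans hw.2.symm)⟩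
    _ = n * cliqueNumOn Gᶜ s := by simp

theorem SimpleGraph.Colorable.colorableOn_induce (h : (G.induce (s : Set V)).Colorable n) :
    ColorableOn G n s := by
  obtain ⟨C⟩ := h
  refine ⟨fun v => if hv : v ∈ s then C ⟨v, hv⟩ else 0, fun v hv => by simp [hv], ?_⟩
  intro v hv w hw hadj hvw
  simp only [hv, hw, dite_true] at hvw
  exact C.valid (G := G.induce (s : Set V)) (v := ⟨v, hv⟩) (w := ⟨w, hw⟩) hadj (Fin.ext hvw)

theorem ColorableOn.colorable [Fintype V] (h : ColorableOn G n univ) : G.Colorable n := by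
  obtain ⟨f, hlt, hf⟩ := h
  exact ⟨SimpleGraph.Coloring.mk (fun v => ⟨f v, hlt v (mem_univ v)⟩)
    fun hadj hvw => hf _ (mem_univ _) _ (mem_univ _) hadj (congrArg Fin.val hvw)⟩

theorem card_le_mul_cliqueNumOn_of_isPerfect [Fintype V] (hG : IsPerfect G) (s : Finset V) :
    #s ≤ cliqueNumOn Gᶜ s * cliqueNumOn G s := by
  have hcol : (G.induce (s : Set V)).Colorable (G.induce (s : Set V)).cliqueNum := by
    rw [← SimpleGraph.chromaticNumber_le_iff_colorable, hG s, cliqueNum_eq_simpleGraph_cliqueNum]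
  calc #s ≤ (G.induce (s : Set V)).cliqueNum * cliqueNumOn Gᶜ s :=
        hcol.colorableOn_induce.card_le_mul_cliqueNumOn_compl
    _ ≤ cliqueNumOn G s * cliqueNumOn Gᶜ s := Nat.mul_le_mul_right _ cliqueNum_induce_le_cliqueNumOn
    _ = cliqueNumOn Gᶜ s * cliqueNumOn G s := Nat.mul_comm _ _

theorem ColorableOn.exists_surjective_coloring_of_erase (hcol : ColorableOn G n (s.erase a))
    (hs : ¬ ColorableOn G n s) :
    ∃ f : V → ℕ, (∀ v ∈ s.erase a, f v < n) ∧
      (∀ v ∈ s.erase a, ∀ w ∈ s.erase a, G.Adj v w → f v ≠ f w) ∧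
      ∀ c < n, ∃ v ∈ s.erase a, f v = c := by
  obtain ⟨f, hlt, hf⟩ := hcol
  refine ⟨f, hlt, hf, fun c hc => by_contra fun hunused => hs ?_⟩
  push Not at hunused
  -- an unused colour `c` can be given to `a`
  refine ⟨Function.update f a c, fun v hv => ?_, fun v hv w hw hadj => ?_⟩
  · rcases eq_or_ne v a with rfl | hva
    · simpa using hc
    · simpa [hva] using hlt v (mem_erase.2 ⟨hva, hv⟩)
  · by_cases hva : v = a <;> by_cases hwa : w = a
    · exact absurd (hva.trans hwa.symm ▸ hadj) (G.loopless.irrefl w)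
    · simpa [hva, hwa] using (hunused w (mem_erase.2 ⟨hwa, hw⟩)).symm
    · simpa [hva, hwa] using hunused v (mem_erase.2 ⟨hva, hv⟩)
    · simpa [hva, hwa] using hf v (mem_erase.2 ⟨hva, hv⟩) w (mem_erase.2 ⟨hwa, hw⟩) hadj

theorem exists_isClique_sdiff_card_eq_cliqueNumOn {A : Finset V}
    (hcol : ColorableOn G (cliqueNumOn G (s \ A)) (s \ A))
    (hs : ¬ ColorableOn G (cliqueNumOn G s) s) (hA : G.IsIndepSet (A : Set V)) :
    ∃ K ⊆ s \ A, G.IsClique (K : Set V) ∧ #K = cliqueNumOn G s := by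
  suffices h : cliqueNumOn G (s \ A) = cliqueNumOn G s from
    h ▸ exists_isClique_card_eq_cliqueNumOn G (s \ A)
  refine (cliqueNumOn_mono sdiff_subset).antisymm (not_lt.1 fun hlt => hs ?_)
  obtain ⟨f, hflt, hf⟩ := hcol
  -- otherwise `A` can serve as an extra colour class
  refine ⟨fun v => if v ∈ A then cliqueNumOn G (s \ A) else f v, fun v hv => ?_,
    fun v hv w hw hadj => ?_⟩
  · by_cases hvA : v ∈ A
    · simpa [hvA] using hlt
    · simpa [hvA] using (hflt v (mem_sdiff.2 ⟨hv, hvA⟩)).trans hlt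
  · by_cases hvA : v ∈ A <;> by_cases hwA : w ∈ A
    · exact absurd hadj (hA (mem_coe.2 hvA) (mem_coe.2 hwA) hadj.ne)
    · simpa [hvA, hwA] using (hflt w (mem_sdiff.2 ⟨hw, hwA⟩)).ne'
    · simpa [hvA, hwA] using (hflt v (mem_sdiff.2 ⟨hv, hvA⟩)).ne
    · simpa [hvA, hwA] using hf v (mem_sdiff.2 ⟨hv, hvA⟩) w (mem_sdiff.2 ⟨hw, hwA⟩) hadj

theorem card_le_card_of_card_inter_eq_ite {ι : Type*} [Fintype ι] [DecidableEq ι]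
    (A K : ι → Finset V) (hK : ∀ i, K i ⊆ s) (hι : Fintype.card ι ≠ 1)
    (h : ∀ i j, #(K j ∩ A i) = if i = j then 0 else 1) : Fintype.card ι ≤ #s := by
  let χ : Finset V → s → ℚ := fun t v => if (v : V) ∈ t then 1 else 0
  have hχ : ∀ t u, t ⊆ s → χ t ⬝ᵥ χ u = #(t ∩ u) := by
    intro t u hts
    simp only [χ, dotProduct, mul_ite, mul_one, mul_zero, ← ite_and]
    rw [sum_coe_sort s fun v => if v ∈ u ∧ v ∈ t then (1 : ℚ) else 0, sum_boole]
    congr 2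
    ext v
    simp only [mem_filter, mem_inter]
    exact ⟨fun hv => ⟨hv.2.2, hv.2.1⟩, fun hv => ⟨hts hv.1, hv.2, hv.1⟩⟩
  suffices hw : LinearIndependent ℚ fun i => χ (A i) by simpa using hw.fintype_card_le_finrank
  rw [Fintype.linearIndependent_iff]
  intro g hg
  -- pairing `∑ g i • χ (A i) = 0` with `χ (K j)` gives `∑ g - g j = 0`
  have hconst : ∀ j, g j = ∑ i, g i := by
    intro j
    have := congrArg (χ (K j) ⬝ᵥ ·) hg
    simp only [dotProduct_sum, dotProduct_smul, hχ _ _ (hK j), h, smul_eq_mul] at this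
    rw [← sum_erase_add _ _ (mem_univ j),
      sum_congr rfl fun x hx => by rw [if_neg (ne_of_mem_erase hx)]] at this
    simp only [if_true, Nat.cast_zero, Nat.cast_one, mul_zero, mul_one, add_zero,
      dotProduct_zero] at this
    rw [← sum_erase_add _ _ (mem_univ j), this, zero_add]
  have hzero : ∑ i, g i = 0 := by
    have : ∑ i, g i = Fintype.card ι * ∑ i, g i := by
      conv_lhs => rw [sum_congr rfl fun i _ => hconst i]
      simp
    have hι' : (Fintype.card ι : ℚ) ≠ 1 := by exact_mod_cast hι
    by_contra hne
    exact hι' (mul_right_cancel₀ hne (by rw [one_mul]; exact this.symm))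
  exact fun i => (hconst i).trans hzero

noncomputable def gasparianFamily (s A₀ : Finset V) (n : ℕ) (f : V → V → ℕ) :
    Option (A₀ × Fin n) → Finset V
  | none => A₀
  | some (a, c) => (s.erase a).filter (f a · = c)

theorem gasparianFamily_subset {A₀ : Finset V} {f : V → V → ℕ} (hA₀ : A₀ ⊆ s) :
    ∀ i, gasparianFamily s A₀ n f i ⊆ s
  | none => hA₀
  | some _ => (filter_subset _ _).trans (erase_subset _ _)

theorem isIndepSet_gasparianFamily {A₀ : Finset V} {f : V → V → ℕ}
    (hA₀ : G.IsIndepSet (A₀ : Set V))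
    (hf : ∀ a ∈ A₀, ∀ v ∈ s.erase a, ∀ w ∈ s.erase a, G.Adj v w → f a v ≠ f a w) :
    ∀ i, G.IsIndepSet (gasparianFamily s A₀ n f i : Set V)
  | none => hA₀
  | some (a, c) => fun v hv w hw _ hadj => by
    simp only [gasparianFamily, coe_filter, Set.mem_ofPred_eq] at hv hw
    exact hf a a.2 v hv.1 w hw.1 hadj (hv.2.trans hw.2.symm)

theorem gasparianFamily_nonempty {A₀ : Finset V} {f : V → V → ℕ} (hA₀ : A₀.Nonempty)
    (hf : ∀ a ∈ A₀, ∀ c < n, ∃ v ∈ s.erase a, f a v = c) :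
    ∀ i, (gasparianFamily s A₀ n f i).Nonempty
  | none => hA₀
  | some (a, c) =>
    let ⟨v, hv, hfv⟩ := hf a a.2 c c.2
    ⟨v, mem_filter.2 ⟨hv, hfv⟩⟩

theorem sum_card_inter_gasparianFamily {K A₀ : Finset V} {f : V → V → ℕ} (hKs : K ⊆ s)
    (hK : #K = n) (hf : ∀ a ∈ A₀, ∀ v ∈ s.erase a, f a v < n) :
    ∑ i, #(K ∩ gasparianFamily s A₀ n f i) = #A₀ * n := by
  have hclasses :
      ∀ a ∈ A₀, ∑ c : Fin n, #(K ∩ (s.erase a).filter (f a · = c)) = #(K.erase a) := by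
    intro a ha
    have hK : ∀ c : ℕ, K ∩ (s.erase a).filter (f a · = c) = (K.erase a).filter (f a · = c) := by
      intro c
      ext v
      simp only [mem_inter, mem_filter, mem_erase]
      exact ⟨fun ⟨hv, ⟨hva, _⟩, hc⟩ => ⟨⟨hva, hv⟩, hc⟩,
        fun ⟨⟨hva, hv⟩, hc⟩ => ⟨hv, ⟨hva, hKs hv⟩, hc⟩⟩
    simp only [hK]
    rw [Fin.sum_univ_eq_sum_range (fun c => #((K.erase a).filter (f a · = c))) n]
    exact (card_eq_sum_card_fiberwise fun v hv =>
      mem_range.2 (hf a ha v (erase_subset_erase a hKs hv))).symm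
  have hcount : ∑ a ∈ A₀, #(K.erase a) + #(A₀ ∩ K) = #A₀ * n := by
    rw [← filter_mem_eq_inter, card_filter, ← sum_add_distrib, ← smul_eq_mul, ← sum_const]
    refine sum_congr rfl fun a _ => ?_
    rw [card_erase_eq_ite]
    split_ifs with h
    · have := card_pos.2 ⟨a, h⟩
      omega
    · omega
  rw [Fintype.sum_option, Fintype.sum_prod_type, ← hcount, add_comm, inter_comm]
  simp only [gasparianFamily]
  rw [sum_coe_sort A₀ fun a => ∑ c : Fin n, #(K ∩ (s.erase a).filter (f a · = c))]
  rw [sum_congr rfl hclasses]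

theorem lt_card_of_minimal_not_colorableOn (ih : ∀ t ⊂ s, ColorableOn G (cliqueNumOn G t) t)
    (hs : ¬ ColorableOn G (cliqueNumOn G s) s) : cliqueNumOn Gᶜ s * cliqueNumOn G s < #s := by
  set ω := cliqueNumOn G s
  have hne : s.Nonempty :=
    nonempty_iff_ne_empty.2 fun h => hs (h ▸ ⟨fun _ => 0, by simp, by simp⟩)
  obtain ⟨A₀, hA₀s, hA₀, hA₀card⟩ := exists_isClique_card_eq_cliqueNumOn Gᶜ s
  rw [SimpleGraph.isClique_compl] at hA₀
  choose! f hf_lt hf_adj hf_surj using fun a (ha : a ∈ s) =>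
    ColorableOn.exists_surjective_coloring_of_erase
      ((ih _ (erase_ssubset ha)).mono (cliqueNumOn_mono (erase_subset a s))) hs
  set A := gasparianFamily s A₀ ω f
  have hAs (i) : A i ⊆ s := gasparianFamily_subset hA₀s i
  have hA (i) : G.IsIndepSet (A i : Set V) :=
    isIndepSet_gasparianFamily hA₀ (fun a ha => hf_adj a (hA₀s ha)) i
  have hAne (i) : (A i).Nonempty :=
    gasparianFamily_nonempty (card_pos.1 (hA₀card ▸ cliqueNumOn_pos hne))
      (fun a ha => hf_surj a (hA₀s ha)) i
  have hK (i) : ∃ K ⊆ s \ A i, G.IsClique (K : Set V) ∧ #K = ω :=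
    exists_isClique_sdiff_card_eq_cliqueNumOn (ih _ (sdiff_ssubset (hAs i) (hAne i))) hs (hA i)
  choose K hKs hK hKcard using hK
  have hcard : Fintype.card (Option (A₀ × Fin ω)) = cliqueNumOn Gᶜ s * ω + 1 := by
    simp [hA₀card]
  have hdisj (i) : #(K i ∩ A i) = 0 :=
    card_eq_zero.2 (disjoint_iff_inter_eq_empty.1 (sdiff_disjoint.mono_left (hKs i)))
  have hinter (i j) : #(K j ∩ A i) = if i = j then 0 else 1 := by
    split_ifs with hij
    · exact hij ▸ hdisj i
    · refine eq_one_of_sum_add_one_eq_card (g := fun i => #(K j ∩ A i))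
        (fun i => (hK j).card_inter_le_one (hA i)) (hdisj j) ?_ hij
      rw [hcard, sum_card_inter_gasparianFamily ((hKs j).trans sdiff_subset) (hKcard j)
        fun a ha => hf_lt a (hA₀s ha), hA₀card]
  have hι : Fintype.card (Option (A₀ × Fin ω)) ≠ 1 := by
    rw [hcard]
    exact Nat.succ_ne_succ_iff.2 (Nat.mul_pos (cliqueNumOn_pos hne) (cliqueNumOn_pos hne)).ne'
  have := card_le_card_of_card_inter_eq_ite A K (fun i => (hKs i).trans sdiff_subset) hι hinter
  omega

theorem colorableOn_cliqueNumOn_of_card_le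
    (h : ∀ t : Finset V, #t ≤ cliqueNumOn Gᶜ t * cliqueNumOn G t) (s : Finset V) :
    ColorableOn G (cliqueNumOn G s) s := by
  induction s using Finset.strongInduction with
  | H s ih => exact by_contra fun hs => (h s).not_gt (lt_card_of_minimal_not_colorableOn ih hs)

theorem colorable_cliqueNum_of_card_le [Fintype V]
    (h : ∀ t : Finset V, #t ≤ cliqueNumOn Gᶜ t * cliqueNumOn G t) : G.Colorable G.cliqueNum :=
  cliqueNumOn_univ (G := G) ▸ (colorableOn_cliqueNumOn_of_card_le h univ).colorable

end Gasparian

section Sandwich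

open Matrix

variable {V : Type*} [Fintype V] {H : SimpleGraph V} {n : ℕ}

theorem Matrix.PosSemidef.dotProduct_mulVec_sum_le {ι : Type*} {B : Matrix V V ℝ}
    (hB : B.PosSemidef) (t : Finset ι) (u : ι → V → ℝ) :
    (∑ c ∈ t, u c) ⬝ᵥ B *ᵥ ∑ c ∈ t, u c ≤ #t * ∑ c ∈ t, u c ⬝ᵥ B *ᵥ u c := by
  have hsymm : ∀ x y : V → ℝ, y ⬝ᵥ B *ᵥ x = x ⬝ᵥ B *ᵥ y := fun x y => by
    rw [dotProduct_mulVec, ← mulVec_transpose, dotProduct_comm]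
    congr 2
    exact (show B.IsSymm by simpa using hB.1)
  have hpair : 0 ≤ ∑ c ∈ t, ∑ d ∈ t, (u c - u d) ⬝ᵥ B *ᵥ (u c - u d) :=
    sum_nonneg fun c _ => sum_nonneg fun d _ => by
      simpa using hB.dotProduct_mulVec_nonneg (u c - u d)
  simp only [mulVec_sub, dotProduct_sub, sub_dotProduct, sum_sub_distrib] at hpair
  simp only [mulVec_sum, dotProduct_sum, sum_dotProduct, sum_const, nsmul_eq_mul, ← mul_sum]
    at hpair ⊢
  rw [sum_comm (f := fun c d => u d ⬝ᵥ B *ᵥ u c)] at hpair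
  simp only [hsymm] at hpair
  linarith

theorem Matrix.PosSemidef.sum_entries_nonneg {B : Matrix V V ℝ} (hB : B.PosSemidef) :
    0 ≤ ∑ i, ∑ j, B i j := by
  simpa [dotProduct, mulVec] using hB.dotProduct_mulVec_nonneg fun _ => 1

theorem sum_entries_le_of_colorable_compl (hH : Hᶜ.Colorable n) {B : Matrix V V ℝ}
    (hB : B.PosSemidef) (hadj : ∀ i j, H.Adj i j → B i j = 0) :
    ∑ i, ∑ j, B i j ≤ n * B.trace := by
  obtain ⟨C⟩ := hH
  let u : Fin n → V → ℝ := fun c v => if C v = c then 1 else 0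
  have hsum : ∑ c, u c = fun _ => 1 := by
    ext v
    simp [u, Finset.sum_apply]
  -- colour classes of `Hᶜ` are cliques of `H`, on which `B` vanishes off the diagonal
  have hclass (i j : V) : (if C i = C j then B i j else 0) = if i = j then B i i else 0 := by
    by_cases hij : i = j
    · simp [hij]
    · by_cases hC : C i = C j
      · simpa [hC, hij] using hadj i j (C.adj_of_ne_of_eq hij hC)
      · simp [hC, hij]
  have hdiag : ∑ c, u c ⬝ᵥ B *ᵥ u c = B.trace := by
    calc ∑ c, u c ⬝ᵥ B *ᵥ u c = ∑ i, ∑ j, if C i = C j then B i j else 0 := by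
          simp [u, dotProduct, mulVec, mul_sum, sum_comm (γ := Fin n)]
      _ = B.trace := by simp [hclass, trace]
  calc ∑ i, ∑ j, B i j = (∑ c, u c) ⬝ᵥ B *ᵥ ∑ c, u c := by
          rw [hsum]
          simp [dotProduct, mulVec]
    _ ≤ #univ * ∑ c, u c ⬝ᵥ B *ᵥ u c := hB.dotProduct_mulVec_sum_le univ u
    _ = n * B.trace := by simp [hdiag]

theorem lovaszTheta_le_of_colorable_compl (hH : Hᶜ.Colorable n) : lovaszTheta H ≤ n :=
  Real.sSup_le (by
    rintro _ ⟨B, hB, htr, hadj, rfl⟩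
    simpa [htr] using sum_entries_le_of_colorable_compl hH hB hadj) n.cast_nonneg

theorem sum_entries_le_card {B : Matrix V V ℝ} (hB : B.PosSemidef) (htr : B.trace = 1)
    (hadj : ∀ i j, H.Adj i j → B i j = 0) : ∑ i, ∑ j, B i j ≤ Fintype.card V := by
  simpa [htr] using sum_entries_le_of_colorable_compl Hᶜ.colorable_of_fintype hB hadj

theorem schrijverTheta_le_lovaszTheta (H : SimpleGraph V) : schrijverTheta H ≤ lovaszTheta H :=
  Real.sSup_le
    (fun _ ⟨B, hB, htr, hadj, _, hx⟩ => le_csSup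
      ⟨Fintype.card V, fun _ ⟨_, hB, htr, hadj, hx⟩ => hx ▸ sum_entries_le_card hB htr hadj⟩
      ⟨B, hB, htr, hadj, hx⟩)
    (Real.sSup_nonneg fun _ ⟨_, hB, _, _, hx⟩ => hx ▸ hB.sum_entries_nonneg)

theorem SimpleGraph.IsIndepSet.card_le_schrijverTheta {S : Finset V}
    (hS : H.IsIndepSet (S : Set V)) : (#S : ℝ) ≤ schrijverTheta H := by
  rcases S.eq_empty_or_nonempty with rfl | hne
  · rw [card_empty, Nat.cast_zero]
    exact Real.sSup_nonneg fun _ ⟨B, _, _, _, hpos, hx⟩ =>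
      hx ▸ sum_nonneg fun i _ => sum_nonneg fun j _ => hpos i j
  let χ : V → ℝ := fun v => if v ∈ S then 1 else 0
  refine le_csSup
    ⟨Fintype.card V, fun _ ⟨_, hB, htr, hadj, _, hx⟩ => hx ▸ sum_entries_le_card hB htr hadj⟩
    ⟨(#S : ℝ)⁻¹ • vecMulVec χ χ, ?_, ?_, ?_, ?_, ?_⟩
  · simpa using (posSemidef_vecMulVec_self_star χ).smul (inv_nonneg.2 (#S).cast_nonneg)
  · simp [trace, χ, vecMulVec_apply, hne.ne_empty]
  · intro i j hij
    simp only [Matrix.smul_apply, vecMulVec_apply, χ, smul_eq_mul]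
    split_ifs with hi hj
    · exact absurd hij (hS (mem_coe.2 hi) (mem_coe.2 hj) hij.ne)
    all_goals simp
  · intro i j
    simp only [Matrix.smul_apply, vecMulVec_apply, χ, smul_eq_mul]
    positivity
  · simp [χ, vecMulVec_apply, hne.ne_empty]

theorem indepNum_strongPow_le_pow (hH : Hᶜ.Colorable n) (k : ℕ) :
    indepNum (strongPow H k) ≤ n ^ k := by
  obtain ⟨C⟩ := hH
  obtain ⟨S, hS⟩ := (strongPow H k).exists_isNIndepSet_indepNum
  rw [indepNum_eq_simpleGraph_indepNum, ← hS.card_eq]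
  have hinj : Set.InjOn (fun (x : Fin k → V) i => C (x i)) S := by
    intro x hx y hy hxy
    by_contra hne
    refine hS.isIndepSet hx hy hne ⟨hne, fun i => ?_⟩
    by_cases h : x i = y i
    · exact Or.inl h
    · exact Or.inr (C.adj_of_ne_of_eq h (congrFun hxy i))
  calc #S ≤ #(univ : Finset (Fin k → Fin n)) :=
        card_le_card_of_injOn _ (fun _ _ => mem_coe.2 (mem_univ _)) hinj
    _ = n ^ k := by simp

theorem indepNum_le_indepNum_strongPow_one (H : SimpleGraph V) :
    indepNum H ≤ indepNum (strongPow H 1) := by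
  obtain ⟨S, hS⟩ := H.exists_isNIndepSet_indepNum
  rw [indepNum_eq_simpleGraph_indepNum, indepNum_eq_simpleGraph_indepNum, ← hS.card_eq]
  let e : V ↪ (Fin 1 → V) := ⟨fun v _ => v, fun v w h => congrFun h 0⟩
  refine (card_map e).symm.trans_le (SimpleGraph.IsIndepSet.card_le_indepNum ?_)
  rintro _ hx _ hy hne ⟨-, hadj⟩
  obtain ⟨v, hv, rfl⟩ := mem_map.1 (mem_coe.1 hx)
  obtain ⟨w, hw, rfl⟩ := mem_map.1 (mem_coe.1 hy)
  have hvw : v ≠ w := fun h => hne (h ▸ rfl)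
  exact hS.isIndepSet hv hw hvw ((hadj 0).resolve_left hvw)

theorem rpow_indepNum_strongPow_le (hH : Hᶜ.Colorable n) (k : ℕ+) :
    (indepNum (strongPow H k) : ℝ) ^ (1 / ((k : ℕ) : ℝ)) ≤ n :=
  calc (indepNum (strongPow H k) : ℝ) ^ (1 / ((k : ℕ) : ℝ))
      ≤ ((n : ℝ) ^ (k : ℕ)) ^ (1 / ((k : ℕ) : ℝ)) :=
        Real.rpow_le_rpow (by positivity) (by exact_mod_cast indepNum_strongPow_le_pow hH k)
          (by positivity)
    _ = n := by rw [one_div, Real.pow_rpow_inv_natCast n.cast_nonneg k.ne_zero]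

theorem shannonCapacity_le_of_colorable_compl (hH : Hᶜ.Colorable n) : shannonCapacity H ≤ n :=
  ciSup_le (rpow_indepNum_strongPow_le hH)

theorem indepNum_le_shannonCapacity (H : SimpleGraph V) : (indepNum H : ℝ) ≤ shannonCapacity H :=
  calc (indepNum H : ℝ) ≤ indepNum (strongPow H 1) := by
        exact_mod_cast indepNum_le_indepNum_strongPow_one H
    _ = (indepNum (strongPow H ((1 : ℕ+) : ℕ)) : ℝ) ^ (1 / (((1 : ℕ+) : ℕ) : ℝ)) := by
        rw [PNat.one_coe, Nat.cast_one, div_one, Real.rpow_one]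
    _ ≤ shannonCapacity H :=
        le_ciSup (f := fun k : ℕ+ => (indepNum (strongPow H k) : ℝ) ^ (1 / ((k : ℕ) : ℝ)))
          ⟨Fintype.card V, Set.forall_mem_range.2
          (rpow_indepNum_strongPow_le Hᶜ.colorable_of_fintype)⟩ 1

theorem eq_indepNum_of_colorable_compl (hH : Hᶜ.Colorable H.indepNum) :
    schrijverTheta H = H.indepNum ∧ lovaszTheta H = H.indepNum ∧
      shannonCapacity H = H.indepNum ∧ Hᶜ.chromaticNumber = H.indepNum := by
  obtain ⟨S, hS⟩ := H.exists_isNIndepSet_indepNum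
  have h₁ : (H.indepNum : ℝ) ≤ schrijverTheta H := hS.card_eq ▸ hS.isIndepSet.card_le_schrijverTheta
  have h₂ := schrijverTheta_le_lovaszTheta H
  have h₃ := lovaszTheta_le_of_colorable_compl hH
  have h₄ := indepNum_eq_simpleGraph_indepNum H ▸ indepNum_le_shannonCapacity H
  have h₅ := shannonCapacity_le_of_colorable_compl hH
  refine ⟨by linarith, by linarith, by linarith, hH.chromaticNumber_le.antisymm ?_⟩
  simpa using Hᶜ.cliqueNum_le_chromaticNumber

end Sandwich

theorem stmt16 {V : Type*} [Fintype V] (G : SimpleGraph V) (hperf : IsPerfect G) :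
    ((cliqueNum G : ℝ) = schrijverTheta Gᶜ ∧
      schrijverTheta Gᶜ = lovaszTheta Gᶜ ∧
      G.chromaticNumber = (cliqueNum G : ℕ∞) ∧
      shannonCapacity Gᶜ = (cliqueNum G : ℝ)) ∧
    ((indepNum G : ℝ) = schrijverTheta G ∧
      schrijverTheta G = lovaszTheta G ∧
      shannonCapacity G = (indepNum G : ℝ) ∧
      Gᶜ.chromaticNumber = (indepNum G : ℕ∞)) := by
  have hcard := card_le_mul_cliqueNumOn_of_isPerfect hperf
  have hG : G.Colorable G.cliqueNum := colorable_cliqueNum_of_card_le hcard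
  have hGc : Gᶜ.Colorable G.indepNum := by
    simpa using colorable_cliqueNum_of_card_le (G := Gᶜ) fun t => by
      simpa [mul_comm] using hcard t
  obtain ⟨h₁, h₂, h₃, h₄⟩ := eq_indepNum_of_colorable_compl (H := Gᶜ) (by simpa using hG)
  obtain ⟨h₅, h₆, h₇, h₈⟩ := eq_indepNum_of_colorable_compl hGc
  simp only [SimpleGraph.indepNum_compl, compl_compl] at h₁ h₂ h₃ h₄
  rw [cliqueNum_eq_simpleGraph_cliqueNum, indepNum_eq_simpleGraph_indepNum]
  exact ⟨⟨h₁.symm, h₁.trans h₂.symm, h₄, h₃⟩, h₅.symm, h₅.trans h₆.symm, h₇, h₈⟩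
end
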